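/- arXiv:2005.11343 — 2 statements merged into one kernel-verified Lean document; each statement's English description precedes it below -/
import Mathlib

section
/- For positive reals a, b, c, d, the quadratic λ² + (a+b+c+d)λ + (ac+ad+bd) has two real roots, i.e. its discriminant (a+b+c+d)² − 4(ac+ad+bd) is nonnegative. -/
/-!
The discriminant equals `(a + b - c - d) ^ 2 + 4 * (b * c)`, a sum of nonnegative terms, and a
monic quadratic whose discriminant is a square factors by the quadratic formula.
-/

theorem sq_add_mul_add_eq_mul_of_discrim_eq_mul_self {K : Type*} [Field K] [NeZero (2 : K)]
    {p q s : K} (h : discrim 1 p q = s * s) (x : K) :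
    x ^ 2 + p * x + q = (x - (-p + s) / 2) * (x - (-p - s) / 2) := by
  rw [discrim] at h
  field_simp
  linear_combination -h

theorem Real.exists_sq_add_mul_add_eq_mul_of_discrim_nonneg {p q : ℝ} (h : 0 ≤ discrim 1 p q) :
    ∃ r₁ r₂ : ℝ, ∀ x : ℝ, x ^ 2 + p * x + q = (x - r₁) * (x - r₂) :=
  ⟨_, _, sq_add_mul_add_eq_mul_of_discrim_eq_mul_self (Real.mul_self_sqrt h).symm⟩

theorem discrim_one_add_add_add {R : Type*} [CommRing R] (a b c d : R) :
    discrim 1 (a + b + c + d) (a * c + a * d + b * d) = (a + b - c - d) ^ 2 + 4 * (b * c) := by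
  rw [discrim]
  ring

theorem stmt1_general (a b c d : ℝ) (hb : 0 < b) (hc : 0 < c) :
    0 ≤ (a + b + c + d) ^ 2 - 4 * (a * c + a * d + b * d) ∧
    ∃ r₁ r₂ : ℝ, ∀ lam : ℝ,
      lam ^ 2 + (a + b + c + d) * lam + (a * c + a * d + b * d) = (lam - r₁) * (lam - r₂) := by
  have hD : 0 ≤ discrim 1 (a + b + c + d) (a * c + a * d + b * d) := by
    rw [discrim_one_add_add_add]
    positivity
  exact ⟨by simpa only [discrim, mul_one] using hD,
    Real.exists_sq_add_mul_add_eq_mul_of_discrim_nonneg hD⟩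

theorem stmt1 (a b c d : ℝ) (ha : 0 < a) (hb : 0 < b) (hc : 0 < c) (hd : 0 < d) :
    0 ≤ (a + b + c + d) ^ 2 - 4 * (a * c + a * d + b * d) ∧
    ∃ r₁ r₂ : ℝ, ∀ lam : ℝ,
      lam ^ 2 + (a + b + c + d) * lam + (a * c + a * d + b * d) = (lam - r₁) * (lam - r₂) :=
  stmt1_general a b c d hb hc
end

section
/- With all parameters positive, the inequality (k_ON k_A/(k_I(k_ON+k_OFF) + k_ON k_A))·(1 + R) < 1, where R = (α_{m2,I}/α_{m2,A})·((γ_{m2}+α_{p2})/(γ_{m2}+α_{p1}+α_{p2}))·(k_I/k_A), holds if and only if α_{m2,I}/α_{m2,A} < (1 + k_OFF/k_ON)·(1 + α_{p1}/(γ_{m2}+α_{p2})). -/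
/-! Clearing the positive denominator `kI (kON + kOFF) + kON kA` cancels `kON kA` and then `kI`,
leaving `kON x < kON + kOFF` for `x = (αm2I / αm2A) q`; and the factor
`q = (γm2 + αp2) / (γm2 + αp1 + αp2)` is the reciprocal of `1 + αp1 / (γm2 + αp2)`. -/

theorem one_add_div_eq_inv_div_add {K : Type*} [DivisionRing K] {s p : K} (hs : s ≠ 0) :
    1 + p / s = (s / (s + p))⁻¹ := by
  rw [inv_div, one_add_div hs]

theorem mul_div_add_mul_mul_one_add_lt_one_iff {kON kOFF kA kI x : ℝ} (hON : 0 < kON)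
    (hOFF : 0 ≤ kOFF) (hA : 0 < kA) (hI : 0 < kI) :
    kON * kA / (kI * (kON + kOFF) + kON * kA) * (1 + x * (kI / kA)) < 1 ↔
      x < 1 + kOFF / kON := by
  have hD : 0 < kI * (kON + kOFF) + kON * kA := by positivity
  have hexpand : kON * kA * (1 + x * (kI / kA)) = kI * (kON * x) + kON * kA := by
    field_simp
    ring
  rw [div_mul_eq_mul_div, div_lt_one hD, hexpand, add_lt_add_iff_right,
    mul_lt_mul_iff_right₀ hI, ← lt_div_iff₀' hON, add_div, div_self hON.ne']

theorem stmt16_general (kON kOFF kA kI αp1 αp2 αm2I αm2A γm2 : ℝ)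
    (h1 : 0 < kON) (h2 : 0 < kOFF) (h3 : 0 < kA) (h4 : 0 < kI)
    (h5 : 0 < αp1) (h6 : 0 < αp2) (h9 : 0 < γm2) :
    ((kON * kA / (kI * (kON + kOFF) + kON * kA)) *
        (1 + (αm2I / αm2A) * ((γm2 + αp2) / (γm2 + αp1 + αp2)) * (kI / kA)) < 1)
      ↔ αm2I / αm2A < (1 + kOFF / kON) * (1 + αp1 / (γm2 + αp2)) := by
  have hq : 0 < (γm2 + αp2) / (γm2 + αp1 + αp2) := by positivity
  rw [mul_div_add_mul_mul_one_add_lt_one_iff h1 h2.le h3 h4, ← lt_div_iff₀ hq,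
    one_add_div_eq_inv_div_add (p := αp1) (by positivity), ← div_eq_mul_inv, add_right_comm]

theorem stmt16 (kON kOFF kA kI αp1 αp2 αm2I αm2A γm2 : ℝ)
    (h1 : 0 < kON) (h2 : 0 < kOFF) (h3 : 0 < kA) (h4 : 0 < kI)
    (h5 : 0 < αp1) (h6 : 0 < αp2) (h7 : 0 < αm2I) (h8 : 0 < αm2A) (h9 : 0 < γm2) :
    ((kON * kA / (kI * (kON + kOFF) + kON * kA)) *
        (1 + (αm2I / αm2A) * ((γm2 + αp2) / (γm2 + αp1 + αp2)) * (kI / kA)) < 1)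
      ↔ αm2I / αm2A < (1 + kOFF / kON) * (1 + αp1 / (γm2 + αp2)) :=
  stmt16_general kON kOFF kA kI αp1 αp2 αm2I αm2A γm2 h1 h2 h3 h4 h5 h6 h9
end
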